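/- arXiv:2107.08339 — 7 statements merged into one kernel-verified Lean document; each statement's English description precedes it below -/
import Mathlib

section
/- Let J_s(x) = K_s(1-x)+B_s and J_b(x) = K_b x + B_b with K_s+K_b > 0, let Φ = (K_s+B_s−B_b)/(K_s+K_b), and let J_soc be the convex quadratic social delay with global minimizer Δ. Define altruistic costs J̃_s(x) = J_s(x) + βK_s(1-x+n_0) and J̃_b(x) = J_b(x) + β(K_b x + K_2 n_2) for β > 0. Then the solution x† of J̃_s(x†) = J̃_b(x†) satisfies x† = ((1−β)/(1+β))·Φ + (2β/(1+β))·Δ. -/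
/-- The altruistic indifference point `x†` is the weighted average
`((1−β)/(1+β))Φ + (2β/(1+β))Δ` of the selfish equilibrium Φ and social optimum Δ. -/
theorem stmt2 (Ks Kb Bs Bb K2 n0 n2 Φ Δ β xdag : ℝ)
    (hsum : 0 < Ks + Kb)
    (hΦ : Φ = (Ks + Bs - Bb) / (Ks + Kb))
    (hΔ : 2 * (Ks + Kb) * Δ = 2 * Ks + Bs - Bb + n0 * Ks - n2 * K2)
    (hβ : 0 < β)
    (Js Jb Jas Jab : ℝ → ℝ)
    (hJs : ∀ x, Js x = Ks * (1 - x) + Bs)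
    (hJb : ∀ x, Jb x = Kb * x + Bb)
    (hJas : ∀ x, Jas x = Js x + β * (Ks * (1 - x + n0)))
    (hJab : ∀ x, Jab x = Jb x + β * (Kb * x + K2 * n2))
    (hcross : Jas xdag = Jab xdag) :
    xdag = ((1 - β) / (1 + β)) * Φ + (2 * β / (1 + β)) * Δ := by
  have h := hcross
  rw [hJas, hJab, hJs, hJb] at h
  have hK : Ks + Kb ≠ 0 := ne_of_gt hsum
  have hb : (1 : ℝ) + β ≠ 0 := by positivity
  subst hΦ
  field_simp
  nlinarith [h, hΔ, sq_nonneg β]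
end

section
/- Let J_soc be a convex quadratic with minimizer Δ, and let Φ < Δ. Let x†(β) = ((1−β)/(1+β))Φ + (2β/(1+β))Δ. Then the map β ↦ J_soc(x†(β)) is strictly decreasing on [0,1], attains its minimum value J_soc(Δ) at β = 1, and is strictly increasing on [1,∞). -/
/-- `β ↦ J_soc(x†(β))` is strictly decreasing on [0,1], minimized at β = 1
with value `J_soc(Δ)`, and strictly increasing on [1,∞). -/
theorem stmt5 (a b c Φ Δ : ℝ) (ha : 0 < a) (hΔ : Δ = -b / (2 * a)) (hΦΔ : Φ < Δ)
    (Jsoc : ℝ → ℝ) (hJ : ∀ x, Jsoc x = a * x ^ 2 + b * x + c)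
    (xdag : ℝ → ℝ)
    (hx : ∀ β, xdag β = ((1 - β) / (1 + β)) * Φ + (2 * β / (1 + β)) * Δ) :
    StrictAntiOn (fun β => Jsoc (xdag β)) (Set.Icc (0 : ℝ) 1) ∧
    Jsoc (xdag 1) = Jsoc Δ ∧
    (∀ β : ℝ, 0 ≤ β → Jsoc (xdag 1) ≤ Jsoc (xdag β)) ∧
    StrictMonoOn (fun β => Jsoc (xdag β)) (Set.Ici (1 : ℝ)) := by
  have ha' : (2 : ℝ) * a ≠ 0 := by positivity
  have hb : b = -2 * a * Δ := by
    rw [hΔ]; field_simp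
  have key : ∀ β : ℝ, 0 ≤ β →
      Jsoc (xdag β) = a * (Φ - Δ) ^ 2 * ((1 - β) / (1 + β)) ^ 2 + Jsoc Δ := by
    intro β hβ
    have hd : (1 : ℝ) + β ≠ 0 := by positivity
    rw [hJ, hJ, hx, hb]
    field_simp
    ring
  have hK : 0 < a * (Φ - Δ) ^ 2 := by
    have : Φ - Δ ≠ 0 := by linarith
    positivity
  have h1 : Jsoc (xdag 1) = Jsoc Δ := by
    rw [key 1 (by norm_num)]; norm_num
  refine ⟨?_, h1, ?_, ?_⟩
  · intro β1 hβ1 β2 hβ2 hlt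
    simp only
    rw [key β1 hβ1.1, key β2 hβ2.1]
    have hd1 : (0:ℝ) < 1 + β1 := by linarith [hβ1.1]
    have hd2 : (0:ℝ) < 1 + β2 := by linarith [hβ2.1]
    have hnum : ((1 - β2) / (1 + β2)) ^ 2 < ((1 - β1) / (1 + β1)) ^ 2 := by
      rw [div_pow, div_pow, div_lt_div_iff₀ (by positivity) (by positivity)]
      have hA : 0 < β2 - β1 := by linarith
      have hB : 0 < 1 - β1 * β2 := by nlinarith [hβ1.1, hβ2.2, hβ1.2]
      nlinarith [mul_pos hA hB]
    nlinarith [mul_lt_mul_of_pos_left hnum hK]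
  · intro β hβ
    rw [key β hβ, h1]
    nlinarith [sq_nonneg ((1 - β) / (1 + β))]
  · intro β1 hβ1 β2 hβ2 hlt
    simp only
    simp only [Set.mem_Ici] at hβ1 hβ2
    rw [key β1 (by linarith), key β2 (by linarith)]
    have hd1 : (0:ℝ) < 1 + β1 := by linarith
    have hd2 : (0:ℝ) < 1 + β2 := by linarith
    have hnum : ((1 - β1) / (1 + β1)) ^ 2 < ((1 - β2) / (1 + β2)) ^ 2 := by
      rw [div_pow, div_pow, div_lt_div_iff₀ (by positivity) (by positivity)]
      have hA : 0 < β2 - β1 := by linarith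
      have hB : 0 < β1 * β2 - 1 := by nlinarith
      nlinarith [mul_pos hA hB]
    nlinarith [mul_lt_mul_of_pos_left hnum hK]
end

section
/- Let 0 < Φ < Δ < 1 and β ∈ (0,1]. If α ≤ Φ, then the unique equilibrium total bypassing proportion consistent with: all altruistic vehicles bypassing (since their bypassing altruistic cost is strictly smaller below x†(β)) and selfish vehicles indifferent at Φ, is x̂_b = Φ, achieved with altruistic bypassing flow α and selfish bypassing flow Φ − α ≥ 0. In particular the social delay equals J_soc(Φ), unchanged from the fully selfish equilibrium. -/
/-- When `α ≤ Φ`, the flow with all altruistic vehicles bypassing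
(`x̃_b = α`) and selfish bypassing flow `Φ − α ≥ 0` is a Wardrop-type equilibrium with
total bypassing `Φ`, and every equilibrium has total bypassing `Φ`, so the social
delay equals `J_soc(Φ)`. -/
theorem stmt8 (Ks Kb Bs Bb K2 n0 n2 Φ Δ β α : ℝ)
    (hKs : 0 < Ks) (hKb : 0 < Kb)
    (hΦdef : Φ = (Ks + Bs - Bb) / (Ks + Kb))
    (hΔdef : 2 * (Ks + Kb) * Δ = 2 * Ks + Bs - Bb + n0 * Ks - n2 * K2)
    (h0 : 0 < Φ) (h1 : Φ < Δ) (h2 : Δ < 1)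
    (hβ : 0 < β) (hβ1 : β ≤ 1) (hα0 : 0 ≤ α) (hα : α ≤ Φ)
    (Js Jb Jas Jab Jsoc : ℝ → ℝ)
    (hJs : ∀ x, Js x = Ks * (1 - x) + Bs)
    (hJb : ∀ x, Jb x = Kb * x + Bb)
    (hJas : ∀ x, Jas x = Js x + β * (Ks * (1 - x + n0)))
    (hJab : ∀ x, Jab x = Jb x + β * (Kb * x + K2 * n2))
    (hJsoc : ∀ x, Jsoc x = (1 - x) * Js x + x * Jb x + n0 * Js x + n2 * (K2 * x + Bb)) :
    0 ≤ Φ - α ∧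
    -- the proposed flow vector (selfish: (1-α)-(Φ-α) steadfast, Φ-α bypass;
    -- altruistic: 0 steadfast, α bypass) is an equilibrium with total bypassing Φ
    (((1 - α) - (Φ - α)) * (Js Φ - Jb Φ) ≤ 0 ∧
     (Φ - α) * (Jb Φ - Js Φ) ≤ 0 ∧
     (0 : ℝ) * (Jas Φ - Jab Φ) ≤ 0 ∧
     α * (Jab Φ - Jas Φ) ≤ 0) ∧
    -- uniqueness: every equilibrium has total bypassing proportion Φ, hence the
    -- social delay equals J_soc(Φ)
    (∀ xss xsb xas xab : ℝ, 0 ≤ xss → 0 ≤ xsb → 0 ≤ xas → 0 ≤ xab →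
      xss + xsb = 1 - α → xas + xab = α →
      xss * (Js (xsb + xab) - Jb (xsb + xab)) ≤ 0 →
      xsb * (Jb (xsb + xab) - Js (xsb + xab)) ≤ 0 →
      xas * (Jas (xsb + xab) - Jab (xsb + xab)) ≤ 0 →
      xab * (Jab (xsb + xab) - Jas (xsb + xab)) ≤ 0 →
      xsb + xab = Φ ∧ Jsoc (xsb + xab) = Jsoc Φ) := by
  have hS : 0 < Ks + Kb := by linarith
  have hΦS : Φ * (Ks + Kb) = Ks + Bs - Bb := by
    rw [hΦdef]; field_simp
  -- key identities
  have hd : ∀ x, Js x - Jb x = (Ks + Kb) * (Φ - x) := by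
    intro x; rw [hJs, hJb]; nlinarith [hΦS]
  have ha : ∀ x, Jas x - Jab x =
      (Ks + Kb) * (Φ - x) + β * ((Ks + Kb) * (2 * Δ - x - Φ)) := by
    intro x; rw [hJas, hJab, hJs, hJb]; nlinarith [hΔdef, hΦS]
  have heq : Js Φ - Jb Φ = 0 := by rw [hd]; ring
  have haΦ : Jab Φ - Jas Φ ≤ 0 := by
    have := ha Φ
    nlinarith [mul_pos hβ (mul_pos hS (by linarith : (0:ℝ) < 2 * Δ - Φ - Φ))]
  have heq' : Jb Φ - Js Φ = 0 := by linarith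
  refine ⟨by linarith, ⟨by rw [heq, mul_zero], by rw [heq', mul_zero], by simp,
    mul_nonpos_of_nonneg_of_nonpos hα0 haΦ⟩, ?_⟩
  intro xss xsb xas xab hss hsb has hab hsum1 hsum2 c1 c2 c3 c4
  set x := xsb + xab with hx
  have hmain : x = Φ := by
    rcases lt_trichotomy x Φ with h | h | h
    · -- x < Φ : selfish delay favors bypass, altruistic cost favors bypass
      have hp : 0 < Js x - Jb x := by
        rw [hd]; exact mul_pos hS (by linarith)
      have hxss : xss = 0 := by
        rcases hss.lt_or_eq with h' | h'
        · exact absurd c1 (not_le.2 (mul_pos h' hp))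
        · exact h'.symm
      have hpa : 0 < Jas x - Jab x := by
        rw [ha]
        have h1' : 0 < (Ks + Kb) * (Φ - x) := mul_pos hS (by linarith)
        have h2' : 0 < β * ((Ks + Kb) * (2 * Δ - x - Φ)) :=
          mul_pos hβ (mul_pos hS (by linarith))
        linarith
      have hxas : xas = 0 := by
        rcases has.lt_or_eq with h' | h'
        · exact absurd c3 (not_le.2 (mul_pos h' hpa))
        · exact h'.symm
      -- then x = (1 - α) + α = 1 > Φ, contradiction
      have : x = 1 := by simp only [hx]; linarith
      linarith
    · exact h
    · -- x > Φ : selfish delay favors steadfast, so xsb = 0 and x = xab ≤ α ≤ Φ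
      have hp : 0 < Jb x - Js x := by
        have := hd x
        nlinarith [mul_pos hS (by linarith : (0:ℝ) < x - Φ)]
      have hxsb : xsb = 0 := by
        rcases hsb.lt_or_eq with h' | h'
        · exact absurd c2 (not_le.2 (mul_pos h' hp))
        · exact h'.symm
      have : x ≤ α := by simp only [hx]; linarith
      linarith
  exact ⟨hmain, by rw [hmain]⟩
end

section
/- Let J_soc(x) = a(x−Δ)² + c with a > 0, let Φ < Δ, and let x†(t) = ((1−t)/(1+t))Φ + (2t/(1+t))Δ. Given error bounds 0 < e_L < e_U, the value β* = 1/√(e_L e_U) satisfies x†(β* e_U) − Δ = Δ − x†(β* e_L), and consequently J_soc(x†(β* e_L)) = J_soc(x†(β* e_U)). -/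
/-- `β* = 1/√(e_L e_U)` equalizes the deviations of `x†(β*e_L)` and
`x†(β*e_U)` about Δ, hence equalizes the social delays at the two error bounds. -/
theorem stmt11 (a c Φ Δ eL eU : ℝ) (ha : 0 < a) (hΦΔ : Φ < Δ)
    (heL : 0 < eL) (heLU : eL < eU)
    (Jsoc : ℝ → ℝ) (hJ : ∀ x, Jsoc x = a * (x - Δ) ^ 2 + c)
    (xdag : ℝ → ℝ)
    (hx : ∀ t, xdag t = ((1 - t) / (1 + t)) * Φ + (2 * t / (1 + t)) * Δ)
    (βstar : ℝ) (hβstar : βstar = 1 / Real.sqrt (eL * eU)) :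
    xdag (βstar * eU) - Δ = Δ - xdag (βstar * eL) ∧
    Jsoc (xdag (βstar * eL)) = Jsoc (xdag (βstar * eU)) := by
  have heU : 0 < eU := heL.trans heLU
  have hprod : 0 < eL * eU := mul_pos heL heU
  have hs0 : 0 < Real.sqrt (eL * eU) := Real.sqrt_pos.mpr hprod
  have hssq : Real.sqrt (eL * eU) ^ 2 = eL * eU := Real.sq_sqrt hprod.le
  have hβ : 0 < βstar := by rw [hβstar]; positivity
  have h1 : (0:ℝ) < 1 + βstar * eL := by positivity
  have h2 : (0:ℝ) < 1 + βstar * eU := by positivity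
  have key : xdag (βstar * eU) - Δ = Δ - xdag (βstar * eL) := by
    rw [hx, hx, hβstar]
    field_simp
    have hLs : Real.sqrt eL ^ 2 = eL := Real.sq_sqrt heL.le
    have hUs : Real.sqrt eU ^ 2 = eU := Real.sq_sqrt heU.le
    have hps : Real.sqrt eL ^ 2 * Real.sqrt eU ^ 2 = eL * eU := by rw [hLs, hUs]
    linear_combination 2 * (Φ - Δ) * hssq
  refine ⟨key, ?_⟩
  rw [hJ, hJ]
  have : (xdag (βstar * eL) - Δ) ^ 2 = (xdag (βstar * eU) - Δ) ^ 2 := by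
    rw [key]; ring
  rw [this]
end

section
/- Let J_soc(x) = a(x−Δ)² + c with a > 0, Φ < Δ, x†(t) = ((1−t)/(1+t))Φ + (2t/(1+t))Δ, and 0 < e_L < e_U. Define F(β) = max{J_soc(x†(βe_L)), J_soc(x†(βe_U))} for β > 0. Then F is minimized over β > 0 uniquely at β* = 1/√(e_L e_U), where F(β*) = J_soc(x†(e_L β*)) = J_soc(x†(e_U β*)). -/
/-- The worst-case social delay
`F(β) = max{J_soc(x†(βe_L)), J_soc(x†(βe_U))}` is uniquely minimized over `β > 0`
at `β* = 1/√(e_L e_U)`, where both branches are equal. -/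
theorem stmt13 (a c Φ Δ eL eU : ℝ) (ha : 0 < a) (hΦΔ : Φ < Δ)
    (heL : 0 < eL) (heLU : eL < eU)
    (Jsoc : ℝ → ℝ) (hJ : ∀ x, Jsoc x = a * (x - Δ) ^ 2 + c)
    (xdag : ℝ → ℝ)
    (hx : ∀ t, xdag t = ((1 - t) / (1 + t)) * Φ + (2 * t / (1 + t)) * Δ)
    (F : ℝ → ℝ)
    (hF : ∀ β, F β = max (Jsoc (xdag (β * eL))) (Jsoc (xdag (β * eU))))
    (βstar : ℝ) (hβstar : βstar = 1 / Real.sqrt (eL * eU)) :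
    (∀ β : ℝ, 0 < β → β ≠ βstar → F βstar < F β) ∧
    F βstar = Jsoc (xdag (βstar * eL)) ∧
    F βstar = Jsoc (xdag (βstar * eU)) := by
  have hD : 0 < Δ - Φ := sub_pos.mpr hΦΔ
  have heU : 0 < eU := heL.trans heLU
  set K := a * (Δ - Φ) ^ 2 with hK
  have hKpos : 0 < K := by positivity
  set p := Real.sqrt eL with hpdef
  set q := Real.sqrt eU with hqdef
  have hp : 0 < p := Real.sqrt_pos.mpr heL
  have hq : 0 < q := Real.sqrt_pos.mpr heU
  have hpq : p < q := Real.sqrt_lt_sqrt heL.le heLU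
  have hp2 : p ^ 2 = eL := Real.sq_sqrt heL.le
  have hq2 : q ^ 2 = eU := Real.sq_sqrt heU.le
  have hsq : Real.sqrt (eL * eU) = p * q := Real.sqrt_mul heL.le eU
  have hβ : βstar = 1 / (p * q) := by rw [hβstar, hsq]
  have hβpos : 0 < βstar := by
    rw [hβ]; exact div_pos one_pos (mul_pos hp hq)
  have hβeL : βstar * eL = p / q := by
    rw [hβ, ← hp2]; field_simp
  have hβeU : βstar * eU = q / p := by
    rw [hβ, ← hq2]; field_simp
  have hJx : ∀ t : ℝ, 0 < t → Jsoc (xdag t) = K * ((1 - t) / (1 + t)) ^ 2 + c := by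
    intro t ht
    have h1 : (1 + t) ≠ 0 := by linarith
    rw [hJ, hx, hK]; field_simp; ring
  -- monotonicity on [0,1]
  have mono1 : ∀ t1 t2 : ℝ, 0 ≤ t1 → t1 < t2 → t2 ≤ 1 →
      ((1 - t2) / (1 + t2)) ^ 2 < ((1 - t1) / (1 + t1)) ^ 2 := by
    intro t1 t2 h0 hlt h1
    have ha1 : (0:ℝ) < 1 + t1 := by linarith
    have ha2 : (0:ℝ) < 1 + t2 := by linarith
    have key : (1 - t2) / (1 + t2) < (1 - t1) / (1 + t1) := by
      rw [div_lt_div_iff₀ ha2 ha1]; nlinarith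
    have nn : 0 ≤ (1 - t2) / (1 + t2) := div_nonneg (by linarith) ha2.le
    exact pow_lt_pow_left₀ key nn (by norm_num)
  -- monotonicity on [1,∞)
  have mono2 : ∀ t1 t2 : ℝ, 1 ≤ t1 → t1 < t2 →
      ((1 - t1) / (1 + t1)) ^ 2 < ((1 - t2) / (1 + t2)) ^ 2 := by
    intro t1 t2 h1 hlt
    have ha1 : (0:ℝ) < 1 + t1 := by linarith
    have ha2 : (0:ℝ) < 1 + t2 := by linarith
    set u := (1 - t1) / (1 + t1) with hu
    set v := (1 - t2) / (1 + t2) with hv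
    have key : v < u := by
      rw [hu, hv, div_lt_div_iff₀ ha2 ha1]; nlinarith
    have np : u ≤ 0 := div_nonpos_of_nonpos_of_nonneg (by linarith) ha1.le
    have h3 : (0:ℝ) < u - v := by linarith
    have h4 : (0:ℝ) < -(u + v) := by linarith
    nlinarith [mul_pos h3 h4]
  -- values at βstar
  have hpq0 : 0 < p / q := div_pos hp hq
  have hqp0 : 0 < q / p := div_pos hq hp
  have hpq1 : p / q < 1 := (div_lt_one hq).mpr hpq
  have hqp1 : 1 < q / p := (one_lt_div hp).mpr hpq
  have e1 : (1 - p / q) / (1 + p / q) = (q - p) / (q + p) := by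
    rw [div_eq_div_iff (by linarith) (by linarith)]
    field_simp
  have e2' : ((1 - q / p) / (1 + q / p)) ^ 2 = ((q - p) / (q + p)) ^ 2 := by
    have h1 : (1:ℝ) - q / p = (p - q) / p := by field_simp
    have h2 : (1:ℝ) + q / p = (p + q) / p := by field_simp
    rw [h1, h2, div_div_div_cancel_right₀]
    · ring
    · exact hp.ne'
  have hvL : Jsoc (xdag (βstar * eL)) = K * ((q - p) / (q + p)) ^ 2 + c := by
    rw [hβeL, hJx _ hpq0, e1]
  have hvU : Jsoc (xdag (βstar * eU)) = K * ((q - p) / (q + p)) ^ 2 + c := by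
    rw [hβeU, hJx _ hqp0, e2']
  have hFs : F βstar = K * ((q - p) / (q + p)) ^ 2 + c := by
    rw [hF, hvL, hvU, max_self]
  refine ⟨?_, by rw [hFs, hvL], by rw [hFs, hvU]⟩
  intro β hβ0 hne
  rcases lt_or_gt_of_ne hne with hlt | hgt
  · -- β < βstar : use the eL branch
    have ht : β * eL < p / q := by
      rw [← hβeL]; exact (mul_lt_mul_iff_of_pos_right heL).mpr hlt
    have hbranch : K * ((q - p) / (q + p)) ^ 2 + c < Jsoc (xdag (β * eL)) := by
      rw [hJx _ (mul_pos hβ0 heL), ← e1]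
      have h5 := mono1 (β * eL) (p / q) (mul_pos hβ0 heL).le ht hpq1.le
      have := mul_lt_mul_of_pos_left h5 hKpos
      linarith
    calc F βstar = K * ((q - p) / (q + p)) ^ 2 + c := hFs
      _ < Jsoc (xdag (β * eL)) := hbranch
      _ ≤ F β := by rw [hF]; exact le_max_left _ _
  · -- βstar < β : use the eU branch
    have ht : q / p < β * eU := by
      rw [← hβeU]; exact (mul_lt_mul_iff_of_pos_right heU).mpr hgt
    have hbranch : K * ((q - p) / (q + p)) ^ 2 + c < Jsoc (xdag (β * eU)) := by
      rw [hJx _ (mul_pos hβ0 heU)]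
      have h5 := mono2 (q / p) (β * eU) hqp1.le ht
      rw [e2'] at h5
      have := mul_lt_mul_of_pos_left h5 hKpos
      linarith
    calc F βstar = K * ((q - p) / (q + p)) ^ 2 + c := hFs
      _ < Jsoc (xdag (β * eU)) := hbranch
      _ ≤ F β := by rw [hF]; exact le_max_right _ _
end

section
/- Let Φ < Δ < 1, 2Δ − Φ > 1, Π = (1−Φ)/(2Δ−Φ−1), x†(t) = ((1−t)/(1+t))Φ + (2t/(1+t))Δ, and J_soc(x) = a(x−Δ)² + c with a > 0. Let 0 < e_L < e_U. Define the capped worst-case delay G(β) = max{J_soc(x†(βe_L)), J_soc(min(x†(βe_U), 1))}. If Π < √(e_U/e_L), then β* = 1/(e_L Π) satisfies x†(Π) − Δ = Δ − x†(β* e_L), so J_soc(x†(β* e_L)) = J_soc(x†(Π)) = J_soc(1), and G(β*) = J_soc(1) as well as β* e_U > Π. -/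
/-- With the cap at total bypassing 1 active (`Pi' < √(e_U/e_L)`),
`β* = 1/(e_L Pi')` equalizes `x†(β*e_L)` with `x†(Pi')` about Δ, so the capped
worst-case delay `G(β*)` equals `J_soc(1)`, and `β* e_U > Pi'`. -/
theorem stmt14 (a c Φ Δ Pi' eL eU : ℝ) (ha : 0 < a)
    (hΦΔ : Φ < Δ) (hΔ1 : Δ < 1) (hcap : 1 < 2 * Δ - Φ)
    (hPi' : Pi' = (1 - Φ) / (2 * Δ - Φ - 1))
    (heL : 0 < eL) (heLU : eL < eU)
    (Jsoc : ℝ → ℝ) (hJ : ∀ x, Jsoc x = a * (x - Δ) ^ 2 + c)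
    (xdag : ℝ → ℝ)
    (hx : ∀ t, xdag t = ((1 - t) / (1 + t)) * Φ + (2 * t / (1 + t)) * Δ)
    (G : ℝ → ℝ)
    (hG : ∀ β, G β = max (Jsoc (xdag (β * eL))) (Jsoc (min (xdag (β * eU)) 1)))
    (hsmall : Pi' < Real.sqrt (eU / eL))
    (βstar : ℝ) (hβstar : βstar = 1 / (eL * Pi')) :
    xdag Pi' - Δ = Δ - xdag (βstar * eL) ∧
    Jsoc (xdag (βstar * eL)) = Jsoc (xdag Pi') ∧
    Jsoc (xdag Pi') = Jsoc 1 ∧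
    G βstar = Jsoc 1 ∧
    Pi' < βstar * eU := by
  have hd : (0:ℝ) < 2 * Δ - Φ - 1 := by linarith
  have hΦ1 : (0:ℝ) < 1 - Φ := by linarith
  have hPpos : 0 < Pi' := by rw [hPi']; positivity
  have hP1 : (0:ℝ) < 1 + Pi' := by linarith
  have hβeL : βstar * eL = 1 / Pi' := by
    rw [hβstar]; field_simp
  have hinv : (0:ℝ) < 1 + 1 / Pi' := by positivity
  -- x†(Π) = 1
  have hx1 : xdag Pi' = 1 := by
    rw [hx, hPi']
    have hd' : (2 * Δ - Φ - 1) ≠ 0 := ne_of_gt hd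
    have h1 : 1 + (1 - Φ) / (2 * Δ - Φ - 1) = (2*Δ - 2*Φ) / (2 * Δ - Φ - 1) := by
      field_simp; ring
    rw [h1]
    have h2 : (0:ℝ) < 2*Δ - 2*Φ := by linarith
    have h3 : -Φ + Δ ≠ 0 := by intro h; linarith
    ring_nf
    have h4 : -1 - Φ + Δ * 2 ≠ 0 := by intro h; linarith
    field_simp
    ring
  -- symmetry
  have hsym : xdag Pi' - Δ = Δ - xdag (βstar * eL) := by
    rw [hβeL, hx, hx]
    have hPne : Pi' ≠ 0 := ne_of_gt hPpos
    have h1 : (1:ℝ) + Pi' ≠ 0 := ne_of_gt hP1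
    have h2 : (1:ℝ) + 1 / Pi' ≠ 0 := ne_of_gt hinv
    field_simp
    ring
  refine ⟨hsym, ?_, ?_, ?_, ?_⟩
  · rw [hJ, hJ]
    have : (xdag (βstar * eL) - Δ)^2 = (xdag Pi' - Δ)^2 := by
      rw [hsym]; ring
    rw [this]
  · rw [hx1]
  · -- G βstar = Jsoc 1
    have hPsq : Pi' ^ 2 < eU / eL := by
      have h0 : (0:ℝ) ≤ eU / eL := le_of_lt (div_pos (heL.trans heLU) heL)
      have := Real.sq_sqrt h0
      nlinarith [Real.sqrt_nonneg (eU / eL)]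
    have hβeU : Pi' < βstar * eU := by
      rw [hβstar]
      rw [div_mul_eq_mul_div, lt_div_iff₀ (mul_pos heL hPpos)]
      rw [lt_div_iff₀ heL] at hPsq
      nlinarith
    -- x†(β*eU) ≥ 1
    have hβeUpos : 0 < βstar * eU := lt_trans hPpos hβeU
    have hxge : 1 ≤ xdag (βstar * eU) := by
      rw [hx]
      set t := βstar * eU with ht
      have h1t : (0:ℝ) < 1 + t := by linarith
      rw [div_mul_eq_mul_div, div_mul_eq_mul_div, ← add_div, le_div_iff₀ h1t]
      have : Pi' * (2 * Δ - Φ - 1) = 1 - Φ := by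
        rw [hPi']; field_simp
      nlinarith
    have hmin : min (xdag (βstar * eU)) 1 = 1 := min_eq_right hxge
    rw [hG, hmin]
    have hJeq : Jsoc (xdag (βstar * eL)) = Jsoc 1 := by
      rw [hJ, hJ]
      have : (xdag (βstar * eL) - Δ)^2 = (xdag Pi' - Δ)^2 := by rw [hsym]; ring
      rw [this, hx1]
    rw [hJeq, max_self]
  · have hPsq : Pi' ^ 2 < eU / eL := by
      have h0 : (0:ℝ) ≤ eU / eL := le_of_lt (div_pos (heL.trans heLU) heL)
      have := Real.sq_sqrt h0
      nlinarith [Real.sqrt_nonneg (eU / eL)]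
    rw [hβstar]
    rw [div_mul_eq_mul_div, lt_div_iff₀ (mul_pos heL hPpos)]
    rw [lt_div_iff₀ heL] at hPsq
    nlinarith
end

section
/- Let 0 < Φ < Δ < 1 and β ∈ (0,1], and suppose Φ < α < x†(β) where x†(β) = ((1−β)/(1+β))Φ + (2β/(1+β))Δ. Then at the unique equilibrium, all altruistic vehicles bypass and all selfish vehicles stay steadfast, so the total bypassing proportion is α; moreover the resulting social delay satisfies J_soc(α) < J_soc(Φ) for any strictly convex quadratic J_soc minimized at Δ. -/
/-- If `Φ < α < x†(β)` with `β ∈ (0,1]`, then at the unique equilibrium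
all altruistic vehicles bypass and all selfish vehicles stay steadfast (total
bypassing α), and `J_soc(α) < J_soc(Φ)` for any strictly convex quadratic `J_soc`
minimized at Δ. -/
theorem stmt16 (Ks Kb Bs Bb K2 n0 n2 Φ Δ β α a c : ℝ)
    (hKs : 0 < Ks) (hKb : 0 < Kb)
    (hΦdef : Φ = (Ks + Bs - Bb) / (Ks + Kb))
    (hΔdef : 2 * (Ks + Kb) * Δ = 2 * Ks + Bs - Bb + n0 * Ks - n2 * K2)
    (h0 : 0 < Φ) (h1 : Φ < Δ) (h2 : Δ < 1)
    (hβ : 0 < β) (hβ1 : β ≤ 1)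
    (Js Jb Jas Jab : ℝ → ℝ)
    (hJs : ∀ x, Js x = Ks * (1 - x) + Bs)
    (hJb : ∀ x, Jb x = Kb * x + Bb)
    (hJas : ∀ x, Jas x = Js x + β * (Ks * (1 - x + n0)))
    (hJab : ∀ x, Jab x = Jb x + β * (Kb * x + K2 * n2))
    (xdag : ℝ → ℝ)
    (hx : ∀ t, xdag t = ((1 - t) / (1 + t)) * Φ + (2 * t / (1 + t)) * Δ)
    (hαl : Φ < α) (hαu : α < xdag β)
    (ha : 0 < a)
    (Jsoc : ℝ → ℝ) (hJsoc : ∀ x, Jsoc x = a * (x - Δ) ^ 2 + c) :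
    (∀ xss xsb xas xab : ℝ, 0 ≤ xss → 0 ≤ xsb → 0 ≤ xas → 0 ≤ xab →
      xss + xsb = 1 - α → xas + xab = α →
      xss * (Js (xsb + xab) - Jb (xsb + xab)) ≤ 0 →
      xsb * (Jb (xsb + xab) - Js (xsb + xab)) ≤ 0 →
      xas * (Jas (xsb + xab) - Jab (xsb + xab)) ≤ 0 →
      xab * (Jab (xsb + xab) - Jas (xsb + xab)) ≤ 0 →
      xsb = 0 ∧ xab = α) ∧
    Jsoc α < Jsoc Φ := by
  have hK : (0:ℝ) < Ks + Kb := by linarith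
  have hβp : (0:ℝ) < 1 + β := by linarith
  have hΦK : (Ks + Kb) * Φ = Ks + Bs - Bb := by
    rw [hΦdef]; field_simp
  have hxdag : (1 + β) * xdag β = (1 - β) * Φ + 2 * β * Δ := by
    rw [hx]; field_simp
  have hΦlt : Φ < xdag β := by nlinarith [mul_pos hβ (sub_pos.2 h1)]
  have key1 : ∀ x, Js x - Jb x = (Ks + Kb) * (Φ - x) := by
    intro x; rw [hJs, hJb]; linear_combination -hΦK
  have key2 : ∀ x, Jas x - Jab x = (Ks + Kb) * ((1 + β) * (xdag β - x)) := by
    intro x; rw [hJas, hJab, hJs, hJb]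
    linear_combination (-(Ks + Kb)) * hxdag - β * hΔdef - (1 - β) * hΦK
  constructor
  · intro xss xsb xas xab hss hsb has hab hsum1 hsum2 e1 e2 e3 e4
    set x := xsb + xab with hxdef
    have hJbJs : Jb x - Js x = (Ks + Kb) * (x - Φ) := by
      have := key1 x; linarith [key1 x, (by ring : (Ks + Kb) * (Φ - x) = -((Ks + Kb) * (x - Φ)))]
    have main1 : Φ < x := by
      by_contra h; push_neg at h
      have hlt : x < xdag β := lt_of_le_of_lt h hΦlt
      have hJpos : 0 < Jas x - Jab x := by
        rw [key2]; exact mul_pos hK (mul_pos hβp (sub_pos.2 hlt))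
      have hxas : xas ≤ 0 := by
        by_contra hc; push_neg at hc
        exact absurd e3 (not_le.2 (mul_pos hc hJpos))
      have : xab = α := by linarith
      linarith
    have hJpos1 : 0 < Jb x - Js x := by
      rw [hJbJs]; exact mul_pos hK (sub_pos.2 main1)
    have hsb0 : xsb = 0 := by
      have : xsb ≤ 0 := by
        by_contra hc; push_neg at hc
        exact absurd e2 (not_le.2 (mul_pos hc hJpos1))
      linarith
    have main2 : x < xdag β := by
      have hx2 : x = xab := by rw [hxdef, hsb0]; ring
      calc x = xab := hx2
        _ ≤ α := by linarith
        _ < xdag β := hαu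
    have hab0 : xab = α := by
      have hJpos : 0 < Jas x - Jab x := by
        rw [key2]; exact mul_pos hK (mul_pos hβp (sub_pos.2 main2))
      have : xas ≤ 0 := by
        by_contra hc; push_neg at hc
        exact absurd e3 (not_le.2 (mul_pos hc hJpos))
      linarith
    exact ⟨hsb0, hab0⟩
  · rw [hJsoc, hJsoc]
    have hαu2 : α < 2 * Δ - Φ := by nlinarith
    have hsq : (α - Δ) ^ 2 < (Φ - Δ) ^ 2 := by nlinarith [mul_pos (sub_pos.2 hαl) (show (0:ℝ) < 2 * Δ - Φ - α by linarith)]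
    have := mul_lt_mul_of_pos_left hsq ha
    linarith
end
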